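/- Let A be a (possibly non-unital) associative K-algebra, (V; ρ, μ) a representation of A, and B : V → A a relative Rota-Baxter operator of weight 0. Then the bilinear operation on V defined by u ∘ v = ρ(B(u))v + μ(B(v))u is associative, i.e., (V, ∘) is an associative algebra. -/
import Mathlib


/-- if `B : V → A` is a relative Rota-Baxter operator of weight 0, then
`u ∘ v = ρ(B(u))v + μ(B(v))u` is an associative product on `V`. -/
theorem stmt14 {K : Type*} [Field K] {A V : Type*}
    [AddCommGroup A] [Module K A] [AddCommGroup V] [Module K V]
    (m : A →ₗ[K] A →ₗ[K] A)
    (assoc : ∀ x y z : A, m (m x y) z = m x (m y z))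
    (ρ μ : A →ₗ[K] V →ₗ[K] V)
    (hρ : ∀ (x y : A) (u : V), ρ (m x y) u = ρ x (ρ y u))
    (hμ : ∀ (x y : A) (u : V), μ (m x y) u = μ y (μ x u))
    (hρμ : ∀ (x y : A) (u : V), ρ x (μ y u) = μ y (ρ x u))
    (B : V →ₗ[K] A)
    (hB : ∀ u v : V, m (B u) (B v) = B (ρ (B u) v + μ (B v) u)) :
    ∀ u v w : V,
      ρ (B (ρ (B u) v + μ (B v) u)) w + μ (B w) (ρ (B u) v + μ (B v) u)
        = ρ (B u) (ρ (B v) w + μ (B w) v) + μ (B (ρ (B v) w + μ (B w) v)) u := by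
  intro u v w
  rw [← hB, ← hB, hρ, hμ, map_add, map_add, hρμ]
  abel
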